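/- Let $(\hat\mu,\hat{\text{sgn}})$ be a reference pair and $P(\hat\mu,\hat{\text{sgn}})$ its set of allowable permutations. Then the union over $\rho \in P(\hat\mu,\hat{\text{sgn}})$ of the sets $\{(t_1,\ldots,t_{2k+1}) : t_{\rho^{-1}(2j)+1} \ge t_{\rho^{-1}(2l)+1} \text{ whenever } \hat\mu(2j)=\hat\mu(2l),\ 2j<2l\}$ equals $\{(t_1,\ldots,t_{2k+1}) : t_{2j+1} \ge t_{2l+1} \text{ whenever } 2j<2l,\ \hat\mu(2l)=\hat\mu(2j),\ \hat{\text{sgn}}(2j)=\hat{\text{sgn}}(2l)\}$. -/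

import Mathlib

/-- A collapsing map: `μ(2) = 1` and `1 ≤ μ(2j) < 2j` for all `1 ≤ j ≤ k`. -/
def IsCollapsing (k : ℕ) (μ : ℕ → ℕ) : Prop :=
  μ 2 = 1 ∧ ∀ j, 1 ≤ j → j ≤ k → 1 ≤ μ (2*j) ∧ μ (2*j) < 2*j

/-- `l` is an index of the domain `{2,4,…,2k}` (node `2l`). -/
def InDom (k l : ℕ) : Prop := 1 ≤ l ∧ l ≤ k

/-- Extension of a collapsing map to odd arguments: `μ(2l+1) := μ(2l)`. -/
def extMap (μ : ℕ → ℕ) : ℕ → ℕ :=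
  fun n => if n % 2 = 0 then μ n else μ (n - 1)

/-- Extension of a sign function (`true` = `+`) to odd arguments. -/
def extSgn (sgn : ℕ → Bool) : ℕ → Bool :=
  fun n => if n % 2 = 0 then sgn n else sgn (n - 1)

/-- The tier value `t(n)`: the least `q` with `μ^q(n) = 1`. -/
noncomputable def tier (μ : ℕ → ℕ) (n : ℕ) : ℕ :=
  sInf {q | (extMap μ)^[q] n = 1}

/-- A signed collapsing pair `(μ, sgn)` is tamed. -/
def Tamed (k : ℕ) (μ : ℕ → ℕ) (sgn : ℕ → Bool) : Prop :=
  (∀ l r, InDom k l → InDom k r →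
      tier μ (2*l) < tier μ (2*r) → 2*l < 2*r) ∧
  (∀ l r, InDom k l → InDom k r → tier μ (2*l) = tier μ (2*r) →
      extMap μ (extMap μ (2*l)) = extMap μ (extMap μ (2*r)) →
      extSgn sgn (μ (2*l)) = extSgn sgn (μ (2*r)) →
      μ (2*l) < μ (2*r) → 2*l < 2*r) ∧
  (∀ l r, InDom k l → InDom k r → tier μ (2*l) = tier μ (2*r) →
      extMap μ (extMap μ (2*l)) = extMap μ (extMap μ (2*r)) →
      extSgn sgn (μ (2*l)) = true → extSgn sgn (μ (2*r)) = false → 2*l < 2*r) ∧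
  (∀ l r, InDom k l → InDom k r → tier μ (2*l) = tier μ (2*r) →
      extMap μ (extMap μ (2*l)) ≠ extMap μ (extMap μ (2*r)) →
      μ (2*l) < μ (2*r) → 2*l < 2*r)

/-- A permutation of `ℕ` extending a permutation of `{2,4,…,2k}` by
`ρ(2l+1) = ρ(2l)+1`, fixing everything else. -/
def ExtPerm (k : ℕ) (ρ : Equiv.Perm ℕ) : Prop :=
  (∀ n, (∀ l, InDom k l → n ≠ 2*l ∧ n ≠ 2*l + 1) → ρ n = n) ∧
  (∀ l, InDom k l → (∃ m, InDom k m ∧ ρ (2*l) = 2*m) ∧ ρ (2*l + 1) = ρ (2*l) + 1)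

/-- `ρ` is allowable with respect to `(μ, sgn)`. -/
def Allowable (k : ℕ) (μ : ℕ → ℕ) (sgn : ℕ → Bool) (ρ : Equiv.Perm ℕ) : Prop :=
  ExtPerm k ρ ∧
  (∀ l, InDom k l → μ (ρ (2*l)) = μ (2*l)) ∧
  (∀ l r, InDom k l → InDom k r → l < r → μ (2*l) = μ (2*r) →
    sgn (2*l) = sgn (2*r) → ρ (2*l) < ρ (2*r))

/-- A reference pair: tamed and, in every fiber of `μ` (left branch), all `+`
nodes come before all `−` nodes. -/
def IsReference (k : ℕ) (μ : ℕ → ℕ) (sgn : ℕ → Bool) : Prop :=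
  Tamed k μ sgn ∧
  ∀ l r, InDom k l → InDom k r → l < r → μ (2*l) = μ (2*r) →
    sgn (2*r) = true → sgn (2*l) = true

/-
An allowable `ρ` keeps indices of the same fiber and sign in order, so its time-ordered region
lies in the sign-ordered one. Conversely, given `t` in the sign-ordered region, sort every fiber
of `l ↦ μ(2l)` by decreasing `t(2l+1)`, breaking ties by the index so that the sort is strict,
and let `ρ` act on the pairs `{2l, 2l+1}` as the inverse of this sort. Then `t` lies in the
time-ordered region of `ρ` by construction, and `ρ` is allowable: indices of the same fiber and
sign are already ordered by decreasing `t`, so the tie-break keeps them in order.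
-/

open Function

theorem Finset.exists_perm_strictMonoOn_comp {α β : Type*} [LinearOrder α] [LinearOrder β]
    (s : Finset α) {f : α → β} (hf : Set.InjOn f s) :
    ∃ σ : Equiv.Perm α, (∀ a, σ a ∈ s ↔ a ∈ s) ∧ (∀ a ∉ s, σ a = a) ∧
      StrictMonoOn (f ∘ σ) s := by
  set e : Fin s.card ≃o s := s.orderIsoOfFin rfl
  set g : Fin s.card → β := fun i => f (e i)
  have hg : Injective g := fun i j hij =>
    e.injective (Subtype.ext (hf (e i).2 (e j).2 hij))
  set τ := Tuple.sort g
  have hτ : StrictMono (g ∘ τ) :=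
    (Tuple.monotone_sort g).strictMono_of_injective (hg.comp τ.injective)
  refine ⟨Equiv.Perm.ofSubtype (e.toEquiv.permCongr τ), fun a => ?_,
    fun a ha => Equiv.Perm.ofSubtype_apply_of_not_mem _ ha, fun a ha b hb hab => ?_⟩
  · by_cases ha : a ∈ s
    · rw [Equiv.Perm.ofSubtype_apply_of_mem _ ha]
      exact iff_of_true (Subtype.coe_prop _) ha
    · rw [Equiv.Perm.ofSubtype_apply_of_not_mem _ ha]
  · simp only [comp_apply, Equiv.Perm.ofSubtype_apply_of_mem _ ha,
      Equiv.Perm.ofSubtype_apply_of_mem _ hb, Equiv.permCongr_apply]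
    exact hτ (e.symm.strictMono (Subtype.mk_lt_mk.2 hab))

theorem Finset.exists_fiberwise_sorting_perm {α β γ : Type*} [LinearOrder α] [LinearOrder β]
    [DecidableEq γ] (s : Finset α) (c : α → γ) {f : α → β} (hf : Set.InjOn f s) :
    ∃ σ : Equiv.Perm α, (∀ a, σ a ∈ s ↔ a ∈ s) ∧ (∀ a ∉ s, σ a = a) ∧ (∀ a, c (σ a) = c a) ∧
      ∀ a ∈ s, ∀ b ∈ s, c a = c b → (f (σ a) < f (σ b) ↔ a < b) := by
  choose σ hmem hfix hmono using fun i =>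
    (s.filter (c · = i)).exists_perm_strictMonoOn_comp
      (hf.mono (Finset.coe_subset.2 (Finset.filter_subset _ _)))
  have hs (i : γ) (a : α) : σ i a ∈ s ↔ a ∈ s := by
    by_cases ha : a ∈ s.filter (c · = i)
    · exact iff_of_true (Finset.mem_of_mem_filter _ ((hmem i a).2 ha))
        (Finset.mem_of_mem_filter _ ha)
    · rw [hfix i a ha]
  have hc (i : γ) (a : α) : c (σ i a) = c a := by
    by_cases ha : a ∈ s.filter (c · = i)
    · rw [(Finset.mem_filter.1 ha).2, (Finset.mem_filter.1 ((hmem i a).2 ha)).2]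
    · rw [hfix i a ha]
  set τ : Equiv.Perm α := Equiv.ofFiberEquiv (f := c) (g := c) fun i =>
    (σ i).subtypePerm (p := (c · = i)) fun a => by rw [hc]
  have hτ (a : α) : τ a = σ (c a) a := rfl
  refine ⟨τ, fun a => by rw [hτ, hs], fun a ha => ?_, fun a => by rw [hτ, hc],
    fun a ha b hb hab => ?_⟩
  · exact hfix _ a fun h => ha (Finset.mem_of_mem_filter _ h)
  · rw [hτ, hτ, ← hab]
    exact (hmono (c a)).lt_iff_lt (by simp [ha]) (by simp [hb, hab])

def pairPerm (π : Equiv.Perm ℕ) : Equiv.Perm ℕ where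
  toFun n := 2 * π (n / 2) + n % 2
  invFun n := 2 * π.symm (n / 2) + n % 2
  left_inv n := by
    simp only [show ∀ m, (2 * m + n % 2) / 2 = m by omega,
      show ∀ m, (2 * m + n % 2) % 2 = n % 2 by omega, Equiv.symm_apply_apply]
    omega
  right_inv n := by
    simp only [show ∀ m, (2 * m + n % 2) / 2 = m by omega,
      show ∀ m, (2 * m + n % 2) % 2 = n % 2 by omega, Equiv.apply_symm_apply]
    omega

theorem pairPerm_apply (π : Equiv.Perm ℕ) (n : ℕ) : pairPerm π n = 2 * π (n / 2) + n % 2 := rfl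

theorem pairPerm_two_mul (π : Equiv.Perm ℕ) (l : ℕ) : pairPerm π (2 * l) = 2 * π l := by
  simp [pairPerm_apply]

theorem pairPerm_two_mul_add_one (π : Equiv.Perm ℕ) (l : ℕ) :
    pairPerm π (2 * l + 1) = 2 * π l + 1 := by
  rw [pairPerm_apply, show (2 * l + 1) / 2 = l by omega, show (2 * l + 1) % 2 = 1 by omega]

theorem pairPerm_symm (π : Equiv.Perm ℕ) : (pairPerm π).symm = pairPerm π.symm := rfl

def orderedRegion (k : ℕ) (μ : ℕ → ℕ) (ρ : Equiv.Perm ℕ) : Set (ℕ → ℝ) :=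
  {t | ∀ j l, InDom k j → InDom k l → 2*j < 2*l → μ (2*j) = μ (2*l) →
    t (ρ.symm (2*l) + 1) ≤ t (ρ.symm (2*j) + 1)}

def signRegion (k : ℕ) (μ : ℕ → ℕ) (sgn : ℕ → Bool) : Set (ℕ → ℝ) :=
  {t | ∀ j l, InDom k j → InDom k l → 2*j < 2*l →
    μ (2*l) = μ (2*j) → sgn (2*j) = sgn (2*l) → t (2*l + 1) ≤ t (2*j + 1)}

theorem orderedRegion_subset_signRegion {k : ℕ} {μ : ℕ → ℕ} {sgn : ℕ → Bool} {ρ : Equiv.Perm ℕ}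
    (hρ : Allowable k μ sgn ρ) : orderedRegion k μ ρ ⊆ signRegion k μ sgn := by
  obtain ⟨⟨-, hpair⟩, hfiber, hstable⟩ := hρ
  intro t ht j l hj hl hjl hμjl hsgn
  obtain ⟨⟨m, hm, hρj⟩, -⟩ := hpair j hj
  obtain ⟨⟨m', hm', hρl⟩, -⟩ := hpair l hl
  have hlt : ρ (2*j) < ρ (2*l) := hstable j l hj hl (by omega) hμjl.symm hsgn
  have hμm : μ (2*m) = μ (2*m') := by rw [← hρj, ← hρl, hfiber j hj, hfiber l hl, hμjl]
  have := ht m m' hm hm' (by omega) hμm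
  rwa [← hρj, ← hρl, Equiv.symm_apply_apply, Equiv.symm_apply_apply] at this

theorem exists_allowable_mem_orderedRegion {k : ℕ} {μ : ℕ → ℕ} {sgn : ℕ → Bool} {t : ℕ → ℝ}
    (ht : t ∈ signRegion k μ sgn) : ∃ ρ, Allowable k μ sgn ρ ∧ t ∈ orderedRegion k μ ρ := by
  have hDom {l : ℕ} : l ∈ Finset.Icc 1 k ↔ InDom k l := Finset.mem_Icc
  obtain ⟨σ, hσs, hσfix, hσμ, hσlt⟩ := (Finset.Icc 1 k).exists_fiberwise_sorting_perm
    (fun l => μ (2 * l)) (f := fun l => toLex (OrderDual.toDual (t (2 * l + 1)), l))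
    (fun _ _ _ _ h => congrArg Prod.snd h)
  have hσsymm {l : ℕ} (hl : InDom k l) : σ.symm l ∈ Finset.Icc 1 k := by
    rw [← hσs, σ.apply_symm_apply]
    exact hDom.2 hl
  have hσμ (l : ℕ) : μ (2 * σ.symm l) = μ (2 * l) := by
    simpa using (hσμ (σ.symm l)).symm
  refine ⟨pairPerm σ.symm, ⟨⟨fun n hn => ?_, fun l hl => ?_⟩, fun l hl => ?_, ?_⟩, ?_⟩
  · have hn2 : n / 2 ∉ Finset.Icc 1 k := fun h => by have := hn _ (hDom.1 h); omega
    rw [pairPerm_apply, σ.symm_apply_eq.2 (hσfix _ hn2).symm]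
    omega
  · exact ⟨⟨σ.symm l, hDom.1 (hσsymm hl), pairPerm_two_mul _ l⟩,
      by rw [pairPerm_two_mul_add_one, pairPerm_two_mul]⟩
  · rw [pairPerm_two_mul, hσμ]
  · intro l r hl hr hlr hμlr hsgn
    have hkey : t (2 * r + 1) ≤ t (2 * l + 1) := ht l r hl hr (by omega) hμlr.symm hsgn
    have hsorted := hσlt _ (hσsymm hl) _ (hσsymm hr) (by simp only [hσμ, hμlr])
    rw [σ.apply_symm_apply, σ.apply_symm_apply] at hsorted
    have hlt := hsorted.1
      (Prod.Lex.toLex_lt_toLex'.2 ⟨OrderDual.toDual_le_toDual.2 hkey, fun _ => hlr⟩)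
    rw [pairPerm_two_mul, pairPerm_two_mul]
    omega
  · intro j l hj hl hjl hμjl
    rw [pairPerm_symm, σ.symm_symm, pairPerm_two_mul, pairPerm_two_mul]
    have hlt := (hσlt j (hDom.2 hj) l (hDom.2 hl) hμjl).2 (by omega)
    exact OrderDual.toDual_le_toDual.1 (Prod.Lex.toLex_lt_toLex'.1 hlt).1

theorem stmt_12_general (k : ℕ) (μ : ℕ → ℕ) (sgn : ℕ → Bool) :
    (⋃ ρ : {ρ : Equiv.Perm ℕ // Allowable k μ sgn ρ},
      {t : ℕ → ℝ | ∀ j l, InDom k j → InDom k l → 2*j < 2*l →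
        μ (2*j) = μ (2*l) →
          t ((ρ : Equiv.Perm ℕ).symm (2*l) + 1) ≤ t ((ρ : Equiv.Perm ℕ).symm (2*j) + 1)}) =
    {t : ℕ → ℝ | ∀ j l, InDom k j → InDom k l → 2*j < 2*l →
      μ (2*l) = μ (2*j) → sgn (2*j) = sgn (2*l) → t (2*l + 1) ≤ t (2*j + 1)} := by
  refine Set.Subset.antisymm
    (Set.iUnion_subset fun ρ => orderedRegion_subset_signRegion ρ.2) fun t ht => ?_
  obtain ⟨ρ, hρ, htρ⟩ := exists_allowable_mem_orderedRegion ht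
  exact Set.mem_iUnion.2 ⟨⟨ρ, hρ⟩, htρ⟩

/-- For a reference pair `(μ̂, ŝgn)`, the union over allowable
permutations `ρ` of the time-ordering regions
`{t : t_{ρ⁻¹(2j)+1} ≥ t_{ρ⁻¹(2l)+1} whenever μ̂(2j) = μ̂(2l), 2j < 2l}`
equals the region
`{t : t_{2j+1} ≥ t_{2l+1} whenever 2j < 2l, μ̂(2l) = μ̂(2j), ŝgn(2j) = ŝgn(2l)}`. -/
theorem stmt_12 (k : ℕ) (μ : ℕ → ℕ) (sgn : ℕ → Bool)
    (hμ : IsCollapsing k μ) (href : IsReference k μ sgn) :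
    (⋃ ρ : {ρ : Equiv.Perm ℕ // Allowable k μ sgn ρ},
      {t : ℕ → ℝ | ∀ j l, InDom k j → InDom k l → 2*j < 2*l →
        μ (2*j) = μ (2*l) →
          t ((ρ : Equiv.Perm ℕ).symm (2*l) + 1) ≤ t ((ρ : Equiv.Perm ℕ).symm (2*j) + 1)}) =
    {t : ℕ → ℝ | ∀ j l, InDom k j → InDom k l → 2*j < 2*l →
      μ (2*l) = μ (2*j) → sgn (2*j) = sgn (2*l) → t (2*l + 1) ≤ t (2*j + 1)} :=
  stmt_12_general k μ sgn
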